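/- For d = 8, the fourth transvectant (F,F)^4 of the generic binary octic F with itself has leading coefficient proportional to x_4·t − 4x_1·x_3 + 3x_2², which equals (z_4 + 3z_2²)/t². -/

import Mathlib

open MvPolynomial

/-- Coefficient ring `ℂ[t, x_1, …, x_8]` (variable `0` is `t`). -/
abbrev R8 := MvPolynomial (Fin 9) ℂ

/-- `ℂ[t, x_1, …, x_8][Y₁, Y₂]`, with `Y₁ = X 0` and `Y₂ = X 1` the outer variables. -/
abbrev S8 := MvPolynomial (Fin 2) R8

open Fin.NatCast in
/-- The semi-invariant `z_i` (here `d = 8`). -/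
noncomputable def z (i : ℕ) : R8 :=
  (∑ k ∈ Finset.range (i-1), ((-1:ℂ)^k * (i.choose k : ℂ)) •
      (X (((i-k : ℕ)) : Fin 9) * X 1 ^ k * X 0 ^ (i-k-1))) +
  (((i-1 : ℕ) : ℂ) * (-1:ℂ)^(i+1)) • (X 1 ^ i : R8)

open Fin.NatCast in
/-- The generic binary octic `F = Σ_{i=0}^{8} C(8,i)·x_i·Y₁^{8-i}·Y₂^i` (with `x_0 = t`). -/
noncomputable def F8 : S8 :=
  ∑ i ∈ Finset.range 9, ((Nat.choose 8 i : ℂ)) •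
    (MvPolynomial.C (X ((i : ℕ) : Fin 9)) * X 0 ^ (8 - i) * X 1 ^ i)

/-- The `r`-th transvectant. -/
noncomputable def transv (r : ℕ) (F G : S8) : S8 :=
  ∑ i ∈ Finset.range (r+1), ((-1:ℂ)^i * (r.choose i : ℂ)) •
    ((fun h => pderiv (0 : Fin 2) h)^[r-i] ((fun h => pderiv (1 : Fin 2) h)^[i] F) *
     (fun h => pderiv (0 : Fin 2) h)^[i] ((fun h => pderiv (1 : Fin 2) h)^[r-i] G))

/-!
Only the `Y₁⁴`-coefficients of the factors `∂^{4-i}_{Y₁} ∂^i_{Y₂} F` contribute to the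
`Y₁⁸`-coefficient of their products, and each of them equals `(8!/4!) x_i`. Hence the leading
coefficient of `(F,F)⁴` is `(8!/4!)² Σ_i (-1)^i C(4,i) x_i x_{4-i}`, which is
`2·1680² (x₄t - 4x₁x₃ + 3x₂²)`.
-/

theorem Finsupp.single_add_single_eq_iff {α : Type*} {i j : α} (hij : i ≠ j) {a b c d : ℕ} :
    Finsupp.single i a + Finsupp.single j b = Finsupp.single i c + Finsupp.single j d ↔
      a = c ∧ b = d := by
  constructor
  · intro h
    have hi := DFunLike.congr_fun h i
    have hj := DFunLike.congr_fun h j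
    simp only [Finsupp.add_apply, Finsupp.single_eq_same, Finsupp.single_eq_of_ne hij,
      Finsupp.single_eq_of_ne hij.symm, add_zero, zero_add] at hi hj
    exact ⟨hi, hj⟩
  · rintro ⟨rfl, rfl⟩
    rfl

namespace MvPolynomial

variable {σ R : Type*} [CommSemiring R]

theorem coeff_iterate_pderiv (i : σ) (k : ℕ) (p : MvPolynomial σ R) (m : σ →₀ ℕ) :
    coeff m ((pderiv i)^[k] p) =
      coeff (m + Finsupp.single i k) p * ((m i + k).descFactorial k : R) := by
  induction k generalizing p with
  | zero => simp
  | succ k ih =>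
    rw [Function.iterate_succ_apply, ih, coeff_pderiv, add_assoc, ← Finsupp.single_add,
      ← add_assoc (m i), Nat.succ_descFactorial_succ]
    simp only [Finsupp.add_apply, Finsupp.single_eq_same]
    push_cast
    ring

open Finset in
theorem coeff_mul_at_single (i : σ) (n : ℕ) (p q : MvPolynomial σ R) :
    coeff (Finsupp.single i n) (p * q) =
      ∑ k ∈ antidiagonal n,
        coeff (Finsupp.single i k.1) p * coeff (Finsupp.single i k.2) q := by
  classical
  rw [coeff_mul, Finsupp.antidiagonal_single, Finset.sum_map]
  rfl

theorem C_mul_X_pow_mul_X_pow (r : R) (i j : σ) (a b : ℕ) :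
    C r * X i ^ a * X j ^ b = monomial (Finsupp.single i a + Finsupp.single j b) r := by
  rw [C_mul_X_pow_eq_monomial, X_pow_eq_monomial, monomial_mul, mul_one]

end MvPolynomial

open Fin.NatCast in
theorem coeff_F8 (a b : ℕ) :
    coeff (Finsupp.single 0 a + Finsupp.single 1 b) F8 =
      if a + b = 8 then (Nat.choose 8 b : ℂ) • X (b : Fin 9) else 0 := by
  simp only [F8, coeff_sum, coeff_smul, C_mul_X_pow_mul_X_pow, coeff_monomial,
    Finsupp.single_add_single_eq_iff Fin.zero_ne_one]
  split_ifs with h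
  · rw [Finset.sum_eq_single b]
    · rw [if_pos ⟨by omega, rfl⟩]
    · intro i _ hi
      rw [if_neg fun h' => hi h'.2, smul_zero]
    · intro hb
      exact absurd (Finset.mem_range.2 (by omega)) hb
  · refine Finset.sum_eq_zero fun i hi => ?_
    rw [Finset.mem_range] at hi
    rw [if_neg (by omega), smul_zero]

open Fin.NatCast in
theorem coeff_iterate_pderiv_F8 (k a b : ℕ) :
    coeff (Finsupp.single 0 k) ((pderiv (0 : Fin 2))^[a] ((pderiv (1 : Fin 2))^[b] F8)) =
      if k + a + b = 8 then (Nat.descFactorial 8 (a + b) : ℂ) • X (b : Fin 9) else 0 := by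
  rw [coeff_iterate_pderiv, ← Finsupp.single_add, coeff_iterate_pderiv, coeff_F8]
  simp only [Finsupp.single_eq_same, Finsupp.single_apply, Fin.zero_ne_one, if_false, zero_add]
  split_ifs with h
  · have hcount : Nat.choose 8 b * b.descFactorial b * (k + a).descFactorial a =
        Nat.descFactorial 8 (a + b) := by
      rw [Nat.descFactorial_self, mul_comm (Nat.choose 8 b),
        ← Nat.descFactorial_eq_factorial_mul_choose, show k + a = 8 - b by omega, mul_comm,
        ← Nat.descFactorial_mul_descFactorial (Nat.le_add_left b a),
        Nat.add_sub_cancel]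
    rw [← hcount]
    simp only [smul_eq_C_mul, Nat.cast_mul, map_mul, map_natCast]
    ring
  · simp

open Fin.NatCast Finset in
theorem coeff_transv_F8 {r : ℕ} (hr : r ≤ 8) :
    coeff (Finsupp.single 0 (2 * (8 - r))) (transv r F8 F8) =
      (Nat.descFactorial 8 r : ℂ) ^ 2 •
        ∑ i ∈ range (r + 1),
          ((-1 : ℂ) ^ i * r.choose i) • (X (i : Fin 9) * X ((r - i : ℕ) : Fin 9)) := by
  simp only [transv, coeff_sum, coeff_smul, smul_sum]
  refine sum_congr rfl fun i hi => ?_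
  rw [mem_range] at hi
  rw [coeff_mul_at_single, sum_eq_single (8 - r, 8 - r)]
  · rw [coeff_iterate_pderiv_F8, coeff_iterate_pderiv_F8, if_pos (by omega), if_pos (by omega),
      Nat.sub_add_cancel (by omega), Nat.add_sub_cancel' (by omega), smul_mul_smul_comm,
      smul_comm, sq]
  · rintro ⟨k, l⟩ hkl hne
    simp only [HasAntidiagonal.mem_antidiagonal, ne_eq, Prod.mk.injEq] at hkl hne
    rw [coeff_iterate_pderiv_F8, coeff_iterate_pderiv_F8]
    dsimp only
    split_ifs <;> first | omega | simp
  · intro h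
    exact absurd (HasAntidiagonal.mem_antidiagonal.2 (by omega)) h

theorem sq_X_zero_mul_eq_z_four_add_three_smul_z_two_sq :
    (X 0 : R8) ^ 2 * (X 4 * X 0 - (4 : ℂ) • (X 1 * X 3) + (3 : ℂ) • (X 2 ^ 2)) =
      z 4 + (3 : ℂ) • (z 2) ^ 2 := by
  simp only [z, Finset.sum_range_succ, Finset.sum_range_zero, smul_eq_C_mul, map_mul, map_pow,
    map_neg, map_one, map_ofNat, map_natCast]
  norm_num [Nat.choose]
  ring

/-- The fourth transvectant `(F,F)⁴` of the generic binary octic has leading coefficient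
(the coefficient of `Y₁^8`) proportional to `x₄t - 4x₁x₃ + 3x₂²`, and this polynomial
equals `(z₄ + 3z₂²)/t²`. -/
theorem stmt10 :
    ∃ c : ℚ, c ≠ 0 ∧
      MvPolynomial.coeff (Finsupp.single (0 : Fin 2) 8) (transv 4 F8 F8) =
        (c : ℂ) • (X 4 * X 0 - (4:ℂ) • (X 1 * X 3) + (3:ℂ) • (X 2 ^ 2) : R8) ∧
      (X 0 : R8) ^ 2 * (X 4 * X 0 - (4:ℂ) • (X 1 * X 3) + (3:ℂ) • (X 2 ^ 2)) =
        z 4 + (3:ℂ) • (z 2) ^ 2 := by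
  refine ⟨2 * 1680 ^ 2, by norm_num, ?_, sq_X_zero_mul_eq_z_four_add_three_smul_z_two_sq⟩
  rw [coeff_transv_F8 (r := 4) (by norm_num)]
  simp only [Finset.sum_range_succ, Finset.sum_range_zero, smul_eq_C_mul]
  norm_num [Nat.descFactorial, Nat.choose]
  open Fin.NatCast in simp only [map_ofNat, show ((1 : ℕ) : Fin 9) = 1 from rfl]
  ring
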